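/- Let r, s, t ∈ {0,1,2,3} and ε₁, ε₂, ε₃, ε₄ ∈ {1, −1}, and let f : {0,1}³ → ℂ satisfy f(0,0,0) = 1, f(0,0,1) = 𝔦^r, f(0,1,0) = 𝔦^s, f(0,1,1) = ε₁𝔦^{r+s}, f(1,0,0) = 𝔦^t, f(1,0,1) = ε₂𝔦^{r+t}, f(1,1,0) = ε₃𝔦^{s+t}, f(1,1,1) = ε₄𝔦^{r+s+t}. Then f is affine if and only if ε₁ε₂ε₃ε₄ = 1. -/

import Mathlib

/-- `𝔦^r` for `r ∈ ℤ₄`; well defined since `𝔦⁴ = 1`. -/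
noncomputable def iPow (r : ZMod 4) : ℂ := Complex.I ^ r.val

/-- View `0, 1 ∈ ℤ₂` as elements of `ℤ₄`. -/
def z2z4 (a : ZMod 2) : ZMod 4 := (a.val : ZMod 4)

/-- Evaluation at a `{0,1}`-point of the multilinear polynomial over `ℤ₄` whose
coefficient on the monomial `∏_{i ∈ S} xᵢ` is `c S`. -/
def evalML4 {ι : Type*} [Fintype ι] [DecidableEq ι]
    (c : Finset ι → ZMod 4) (x : ι → ZMod 2) : ZMod 4 :=
  ∑ S : Finset ι, c S * ∏ i ∈ S, z2z4 (x i)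

/-- `x` extended by a final coordinate `1` (at `none`). -/
def extend1 {ι : Type*} (x : ι → ZMod 2) : Option ι → ZMod 2 := fun o => o.elim 1 x

/-- A signature is affine if it is `λ · χ_{A(x,1)ᵀ = 0} · 𝔦^{Q(x)}` for a matrix `A`
over `ℤ₂` and a multilinear polynomial `Q` over `ℤ₄` of total degree at most 2
whose cross terms all have even coefficients. -/
def IsAffine {ι : Type*} [Fintype ι] [DecidableEq ι] (f : (ι → ZMod 2) → ℂ) : Prop :=
  ∃ (lam : ℂ) (m : ℕ) (A : Matrix (Fin m) (Option ι) (ZMod 2))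
    (c : Finset ι → ZMod 4),
    (∀ S : Finset ι, 2 < S.card → c S = 0) ∧
    (∀ S : Finset ι, S.card = 2 → ∃ t : ZMod 4, c S = 2 * t) ∧
    ∀ x : ι → ZMod 2,
      f x = lam * (if A.mulVec (extend1 x) = 0 then 1 else 0) * iPow (evalML4 c x)

/-!
If an affine signature vanishes nowhere, its indicator factor is constant, so `f = λ · 𝔦^Q` with
`Q` of degree at most 2. The third finite difference of such a `Q` on the cube vanishes: the
values of `Q` at the even-weight points and at the odd-weight points have the same sum, so
`f(000) f(011) f(101) f(110) = f(001) f(010) f(100) f(111)`, which for the given `f` says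
`ε₁ε₂ε₃ = ε₄`. Conversely, writing `εₖ = 𝔦^{2uₖ}`, the polynomial
`Q = t x₀ + s x₁ + r x₂ + 2u₃ x₀x₁ + 2u₂ x₀x₂ + 2u₁ x₁x₂` has `f = 𝔦^Q` exactly when
`ε₄ = ε₁ε₂ε₃`.
-/

lemma iPow_natCast (n : ℕ) : iPow n = Complex.I ^ n := by
  rw [iPow, ZMod.val_natCast, ← pow_eq_pow_mod n Complex.I_pow_four]

lemma iPow_zero : iPow 0 = 1 := pow_zero _

lemma iPow_add (a b : ZMod 4) : iPow (a + b) = iPow a * iPow b := by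
  rw [← ZMod.natCast_zmod_val a, ← ZMod.natCast_zmod_val b, ← Nat.cast_add, iPow_natCast,
    iPow_natCast, iPow_natCast, pow_add]

lemma exists_iPow_two_mul_eq {e : ℂ} (he : e = 1 ∨ e = -1) :
    ∃ u : ZMod 4, iPow (2 * u) = e := by
  rcases he with rfl | rfl
  · exact ⟨0, by simp [iPow]⟩
  · exact ⟨1, by simp [iPow, show (2 : ZMod 4).val = 2 from rfl]⟩

lemma z2z4_zero : z2z4 0 = 0 := rfl

lemma z2z4_one : z2z4 1 = 1 := rfl

section Affine

variable {ι : Type*} [Fintype ι] [DecidableEq ι] {f : (ι → ZMod 2) → ℂ}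

lemma IsAffine.exists_eq_of_ne_zero (hf : IsAffine f) :
    ∃ (lam : ℂ) (c : Finset ι → ZMod 4), (∀ S : Finset ι, 2 < S.card → c S = 0) ∧
      ∀ x, f x ≠ 0 → f x = lam * iPow (evalML4 c x) := by
  obtain ⟨lam, m, A, c, hc, -, hfx⟩ := hf
  refine ⟨lam, c, hc, fun x hx => ?_⟩
  by_cases hA : A.mulVec (extend1 x) = 0
  · simpa [hA] using hfx x
  · simp [hfx x, hA] at hx

lemma isAffine_of_eq_iPow (c : Finset ι → ZMod 4)
    (hc₃ : ∀ S : Finset ι, 2 < S.card → c S = 0)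
    (hc₂ : ∀ S : Finset ι, S.card = 2 → ∃ u : ZMod 4, c S = 2 * u)
    (hf : ∀ x, f x = iPow (evalML4 c x)) : IsAffine f :=
  ⟨1, 0, 0, c, hc₃, hc₂, fun x => by simp [hf x]⟩

end Affine

lemma forall_fin_three_zmod_two {P : (Fin 3 → ZMod 2) → Prop}
    (h000 : P ![0, 0, 0]) (h001 : P ![0, 0, 1]) (h010 : P ![0, 1, 0]) (h011 : P ![0, 1, 1])
    (h100 : P ![1, 0, 0]) (h101 : P ![1, 0, 1]) (h110 : P ![1, 1, 0]) (h111 : P ![1, 1, 1])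
    (x : Fin 3 → ZMod 2) : P x := by
  have hx : ∀ x : Fin 3 → ZMod 2, x = ![0, 0, 0] ∨ x = ![0, 0, 1] ∨ x = ![0, 1, 0] ∨
      x = ![0, 1, 1] ∨ x = ![1, 0, 0] ∨ x = ![1, 0, 1] ∨ x = ![1, 1, 0] ∨ x = ![1, 1, 1] := by
    decide
  rcases hx x with rfl | rfl | rfl | rfl | rfl | rfl | rfl | rfl <;> assumption

lemma evalML4_fin_three (c : Finset (Fin 3) → ZMod 4) (x₀ x₁ x₂ : ZMod 2) :
    evalML4 c ![x₀, x₁, x₂] = c ∅ + c {0} * z2z4 x₀ + c {1} * z2z4 x₁ + c {2} * z2z4 x₂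
      + c {0, 1} * z2z4 x₀ * z2z4 x₁ + c {0, 2} * z2z4 x₀ * z2z4 x₂
      + c {1, 2} * z2z4 x₁ * z2z4 x₂ + c {0, 1, 2} * z2z4 x₀ * z2z4 x₁ * z2z4 x₂ := by
  rw [evalML4, show (Finset.univ : Finset (Finset (Fin 3))) =
      {∅, {0}, {1}, {2}, {0, 1}, {0, 2}, {1, 2}, {0, 1, 2}} by decide]
  simp +decide [Finset.sum_insert, Finset.prod_insert]
  ring

lemma evalML4_sum_odd_eq_sum_even_add_cubic (c : Finset (Fin 3) → ZMod 4) :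
    evalML4 c ![0, 0, 1] + evalML4 c ![0, 1, 0] + evalML4 c ![1, 0, 0]
        + evalML4 c ![1, 1, 1] =
      evalML4 c ![0, 0, 0] + evalML4 c ![0, 1, 1] + evalML4 c ![1, 0, 1]
        + evalML4 c ![1, 1, 0] + c {0, 1, 2} := by
  simp only [evalML4_fin_three, z2z4_zero, z2z4_one]
  ring

lemma IsAffine.prod_even_eq_prod_odd {f : (Fin 3 → ZMod 2) → ℂ} (hf : IsAffine f)
    (hne : ∀ x, f x ≠ 0) :
    f ![0, 0, 0] * f ![0, 1, 1] * f ![1, 0, 1] * f ![1, 1, 0] =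
      f ![0, 0, 1] * f ![0, 1, 0] * f ![1, 0, 0] * f ![1, 1, 1] := by
  obtain ⟨lam, c, hc, hfc⟩ := hf.exists_eq_of_ne_zero
  have hQ := evalML4_sum_odd_eq_sum_even_add_cubic c
  rw [hc {0, 1, 2} (by decide), add_zero] at hQ
  simp only [hfc _ (hne _)]
  calc _ = lam ^ 4 * iPow (evalML4 c ![0, 0, 0] + evalML4 c ![0, 1, 1]
        + evalML4 c ![1, 0, 1] + evalML4 c ![1, 1, 0]) := by simp only [iPow_add]; ring
    _ = _ := by rw [← hQ]; simp only [iPow_add]; ring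

def ternaryCoeff (a₀ a₁ a₂ b₀₁ b₀₂ b₁₂ : ZMod 4) (S : Finset (Fin 3)) : ZMod 4 :=
  if S = {0} then a₀ else if S = {1} then a₁ else if S = {2} then a₂
  else if S = {0, 1} then b₀₁ else if S = {0, 2} then b₀₂ else if S = {1, 2} then b₁₂ else 0

section ternaryCoeff

variable (a₀ a₁ a₂ b₀₁ b₀₂ b₁₂ : ZMod 4)

lemma ternaryCoeff_of_two_lt_card {S : Finset (Fin 3)} (hS : 2 < S.card) :
    ternaryCoeff a₀ a₁ a₂ b₀₁ b₀₂ b₁₂ S = 0 := by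
  obtain rfl : S = Finset.univ :=
    Finset.eq_univ_of_card S (le_antisymm S.card_le_univ (by rw [Fintype.card_fin]; omega))
  rfl

lemma exists_ternaryCoeff_eq_two_mul (u₀₁ u₀₂ u₁₂ : ZMod 4) {S : Finset (Fin 3)}
    (hS : S.card = 2) :
    ∃ u, ternaryCoeff a₀ a₁ a₂ (2 * u₀₁) (2 * u₀₂) (2 * u₁₂) S = 2 * u := by
  have hpairs :
      ∀ S : Finset (Fin 3), S.card = 2 → S = {0, 1} ∨ S = {0, 2} ∨ S = {1, 2} := by
    decide
  rcases hpairs S hS with rfl | rfl | rfl <;> exact ⟨_, rfl⟩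

lemma evalML4_ternaryCoeff (x₀ x₁ x₂ : ZMod 2) :
    evalML4 (ternaryCoeff a₀ a₁ a₂ b₀₁ b₀₂ b₁₂) ![x₀, x₁, x₂] =
      a₀ * z2z4 x₀ + a₁ * z2z4 x₁ + a₂ * z2z4 x₂ + b₀₁ * z2z4 x₀ * z2z4 x₁
        + b₀₂ * z2z4 x₀ * z2z4 x₂ + b₁₂ * z2z4 x₁ * z2z4 x₂ := by
  rw [evalML4_fin_three]
  simp +decide [ternaryCoeff]

end ternaryCoeff

theorem ternary_affine_iff_general (r s t : ℕ)
    (e₁ e₂ e₃ e₄ : ℂ)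
    (he₁ : e₁ = 1 ∨ e₁ = -1) (he₂ : e₂ = 1 ∨ e₂ = -1)
    (he₃ : e₃ = 1 ∨ e₃ = -1) (he₄ : e₄ = 1 ∨ e₄ = -1)
    (f : (Fin 3 → ZMod 2) → ℂ)
    (h000 : f ![0, 0, 0] = 1)
    (h001 : f ![0, 0, 1] = Complex.I ^ r)
    (h010 : f ![0, 1, 0] = Complex.I ^ s)
    (h011 : f ![0, 1, 1] = e₁ * Complex.I ^ (r + s))
    (h100 : f ![1, 0, 0] = Complex.I ^ t)
    (h101 : f ![1, 0, 1] = e₂ * Complex.I ^ (r + t))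
    (h110 : f ![1, 1, 0] = e₃ * Complex.I ^ (s + t))
    (h111 : f ![1, 1, 1] = e₄ * Complex.I ^ (r + s + t)) :
    IsAffine f ↔ e₁ * e₂ * e₃ * e₄ = 1 := by
  have he₄_sq : e₄ * e₄ = 1 := by rcases he₄ with rfl | rfl <;> norm_num
  constructor
  · intro hf
    have sign_ne_zero {e : ℂ} (he : e = 1 ∨ e = -1) : e ≠ 0 := by
      rcases he with rfl | rfl <;> norm_num
    have hne : ∀ x, f x ≠ 0 := by
      refine forall_fin_three_zmod_two ?_ ?_ ?_ ?_ ?_ ?_ ?_ ?_ <;>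
        simp [h000, h001, h010, h011, h100, h101, h110, h111, sign_ne_zero he₁,
          sign_ne_zero he₂, sign_ne_zero he₃, sign_ne_zero he₄]
    have hrel := hf.prod_even_eq_prod_odd hne
    rw [h000, h011, h101, h110, h001, h010, h100, h111] at hrel
    have hI : Complex.I ^ (2 * (r + s + t)) ≠ 0 := pow_ne_zero _ Complex.I_ne_zero
    have h₁₂₃ : e₁ * e₂ * e₃ = e₄ := mul_right_cancel₀ hI (by linear_combination hrel)
    rw [h₁₂₃, he₄_sq]
  · intro h
    have h₁₂₃ : e₁ * e₂ * e₃ = e₄ := by linear_combination e₄ * h - (e₁ * e₂ * e₃) * he₄_sq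
    subst h₁₂₃
    obtain ⟨u₁, hu₁⟩ := exists_iPow_two_mul_eq he₁
    obtain ⟨u₂, hu₂⟩ := exists_iPow_two_mul_eq he₂
    obtain ⟨u₃, hu₃⟩ := exists_iPow_two_mul_eq he₃
    refine isAffine_of_eq_iPow (ternaryCoeff t s r (2 * u₃) (2 * u₂) (2 * u₁))
      (fun _ => ternaryCoeff_of_two_lt_card _ _ _ _ _ _)
      (fun _ => exists_ternaryCoeff_eq_two_mul _ _ _ _ _ _) ?_
    refine forall_fin_three_zmod_two ?_ ?_ ?_ ?_ ?_ ?_ ?_ ?_ <;>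
      simp only [evalML4_ternaryCoeff, z2z4_zero, z2z4_one, mul_zero, mul_one, zero_add, add_zero,
        iPow_zero, iPow_add, iPow_natCast, hu₁, hu₂, hu₃,
        h000, h001, h010, h011, h100, h101, h110, h111] <;>
      ring

theorem ternary_affine_iff (r s t : ℕ) (hr : r < 4) (hs : s < 4) (ht : t < 4)
    (e₁ e₂ e₃ e₄ : ℂ)
    (he₁ : e₁ = 1 ∨ e₁ = -1) (he₂ : e₂ = 1 ∨ e₂ = -1)
    (he₃ : e₃ = 1 ∨ e₃ = -1) (he₄ : e₄ = 1 ∨ e₄ = -1)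
    (f : (Fin 3 → ZMod 2) → ℂ)
    (h000 : f ![0, 0, 0] = 1)
    (h001 : f ![0, 0, 1] = Complex.I ^ r)
    (h010 : f ![0, 1, 0] = Complex.I ^ s)
    (h011 : f ![0, 1, 1] = e₁ * Complex.I ^ (r + s))
    (h100 : f ![1, 0, 0] = Complex.I ^ t)
    (h101 : f ![1, 0, 1] = e₂ * Complex.I ^ (r + t))
    (h110 : f ![1, 1, 0] = e₃ * Complex.I ^ (s + t))
    (h111 : f ![1, 1, 1] = e₄ * Complex.I ^ (r + s + t)) :
    IsAffine f ↔ e₁ * e₂ * e₃ * e₄ = 1 :=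
  ternary_affine_iff_general r s t e₁ e₂ e₃ e₄ he₁ he₂ he₃ he₄ f h000 h001 h010 h011 h100 h101 h110
    h111
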